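/- Let E and F be complex Hilbert spaces and let T : E →ₗ.[ℂ] F be a densely defined closed unbounded operator with Hilbert adjoint T†, and assume the range of T is a closed subspace of F. Then the domain of T† admits the description dom T† = { Tf + w : f ∈ dom T with Tf ∈ dom T†, and w ∈ ker T† }, and for any such decomposition v = Tf + w one has T†v = T†(Tf). -/

import Mathlib

/-!
The closed range `R` of `T` gives `F = R ⊕ Rᗮ`. Every `w ∈ Rᗮ` lies in `dom T†` with `T† w = 0`,
since `⟪w, T x⟫ = 0 = ⟪0, x⟫` for all `x ∈ dom T`. So for `v ∈ dom T†`, writing `v = T f + w`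
with `w ∈ Rᗮ` gives `T f = v - w ∈ dom T†`; the formula for `T† v` is linearity of `T†`.
-/

namespace LinearPMap

variable {𝕜 E F : Type*} [RCLike 𝕜]
  [NormedAddCommGroup E] [InnerProductSpace 𝕜 E] [CompleteSpace E]
  [NormedAddCommGroup F] [InnerProductSpace 𝕜 F]
  {T : E →ₗ.[𝕜] F}

theorem orthogonal_range_le_adjoint_domain : (LinearMap.range T.toFun)ᗮ ≤ T†.domain :=
  fun w hw => mem_adjoint_domain_of_exists w
    ⟨0, fun x => (inner_zero_left _).trans ((Submodule.mem_orthogonal' _ w).mp hw _ ⟨x, rfl⟩).symm⟩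

theorem adjoint_apply_eq_zero_of_mem_orthogonal_range (hT : Dense (T.domain : Set E))
    (w : T†.domain) (hw : (w : F) ∈ (LinearMap.range T.toFun)ᗮ) : T† w = 0 :=
  adjoint_apply_eq hT w fun x =>
    (inner_zero_left _).trans ((Submodule.mem_orthogonal' _ _).mp hw _ ⟨x, rfl⟩).symm

theorem exists_range_add_ker_adjoint_of_mem_adjoint_domain (hT : Dense (T.domain : Set E))
    [(LinearMap.range T.toFun).HasOrthogonalProjection] {v : F} (hv : v ∈ T†.domain) :
    ∃ (f : E) (hf : f ∈ T.domain), T ⟨f, hf⟩ ∈ T†.domain ∧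
      ∃ (w : F) (hw : w ∈ T†.domain), T† ⟨w, hw⟩ = 0 ∧ v = T ⟨f, hf⟩ + w := by
  obtain ⟨_, ⟨x, rfl⟩, w, hw, rfl⟩ := (LinearMap.range T.toFun).exists_add_mem_mem_orthogonal v
  have hw_dom : w ∈ T†.domain := orthogonal_range_le_adjoint_domain hw
  have hTx_dom : T x ∈ T†.domain := by simpa using sub_mem hv hw_dom
  exact ⟨x, x.2, hTx_dom, w, hw_dom,
    adjoint_apply_eq_zero_of_mem_orthogonal_range hT ⟨w, hw_dom⟩ hw, rfl⟩

end LinearPMap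

namespace DiracFractal

theorem adjoint_domain_eq_range_add_ker_general
    {E F : Type*}
    [NormedAddCommGroup E] [InnerProductSpace ℂ E] [CompleteSpace E]
    [NormedAddCommGroup F] [InnerProductSpace ℂ F] [CompleteSpace F]
    (T : E →ₗ.[ℂ] F) (hd : Dense (T.domain : Set E))
    (hran : IsClosed (Set.range fun x : T.domain => T x)) :
    ((T.adjoint.domain : Submodule ℂ F) : Set F) =
      {v : F | ∃ (f : E) (hf : f ∈ T.domain), T ⟨f, hf⟩ ∈ T.adjoint.domain ∧
        ∃ (w : F) (hw : w ∈ T.adjoint.domain),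
          T.adjoint ⟨w, hw⟩ = 0 ∧ v = T ⟨f, hf⟩ + w} ∧
      ∀ (f : E) (hf : f ∈ T.domain) (hTf : T ⟨f, hf⟩ ∈ T.adjoint.domain)
        (w : F) (hw : w ∈ T.adjoint.domain), T.adjoint ⟨w, hw⟩ = 0 →
          ∀ hv : T ⟨f, hf⟩ + w ∈ T.adjoint.domain,
            T.adjoint ⟨T ⟨f, hf⟩ + w, hv⟩ = T.adjoint ⟨T ⟨f, hf⟩, hTf⟩ := by
  have : CompleteSpace (LinearMap.range T.toFun) :=
    IsClosed.completeSpace_coe (hs := by rwa [LinearMap.coe_range])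
  refine ⟨Set.ext fun v => ⟨T.exists_range_add_ker_adjoint_of_mem_adjoint_domain hd, ?_⟩, ?_⟩
  · rintro ⟨f, hf, hTf, w, hw, -, rfl⟩
    exact add_mem hTf hw
  · intro f hf hTf w hw hw_ker hv
    rw [show (⟨T ⟨f, hf⟩ + w, hv⟩ : T.adjoint.domain) = ⟨_, hTf⟩ + ⟨w, hw⟩ from rfl,
      LinearPMap.map_add, hw_ker, add_zero]

/-- Corollary of Section 2 of Hinz–Teplyaev, abstract form.
Let `T : E →ₗ.[ℂ] F` be a densely defined closed operator between complex Hilbert spaces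
with closed range.  Then
`dom T† = { T f + w : f ∈ dom T with T f ∈ dom T†, w ∈ ker T† }`, and for any such
decomposition `v = T f + w` one has `T† v = T† (T f)`. -/
theorem adjoint_domain_eq_range_add_ker
    {E F : Type*}
    [NormedAddCommGroup E] [InnerProductSpace ℂ E] [CompleteSpace E]
    [NormedAddCommGroup F] [InnerProductSpace ℂ F] [CompleteSpace F]
    (T : E →ₗ.[ℂ] F) (hd : Dense (T.domain : Set E)) (hc : T.IsClosed)
    (hran : IsClosed (Set.range fun x : T.domain => T x)) :
    ((T.adjoint.domain : Submodule ℂ F) : Set F) =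
      {v : F | ∃ (f : E) (hf : f ∈ T.domain), T ⟨f, hf⟩ ∈ T.adjoint.domain ∧
        ∃ (w : F) (hw : w ∈ T.adjoint.domain),
          T.adjoint ⟨w, hw⟩ = 0 ∧ v = T ⟨f, hf⟩ + w} ∧
      ∀ (f : E) (hf : f ∈ T.domain) (hTf : T ⟨f, hf⟩ ∈ T.adjoint.domain)
        (w : F) (hw : w ∈ T.adjoint.domain), T.adjoint ⟨w, hw⟩ = 0 →
          ∀ hv : T ⟨f, hf⟩ + w ∈ T.adjoint.domain,
            T.adjoint ⟨T ⟨f, hf⟩ + w, hv⟩ = T.adjoint ⟨T ⟨f, hf⟩, hTf⟩ :=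
  adjoint_domain_eq_range_add_ker_general T hd hran

end DiracFractal
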